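/- Every polynomial in ℝ[ω₁, ω₂, ω₃, v₁, v₂, v₃] invariant under the translation action (ω, v) ↦ (ω, ω×r + v) for all r ∈ ℝ³ lies in the subalgebra generated by ω₁, ω₂, ω₃ and ω·v = ω₁v₁ + ω₂v₂ + ω₃v₃. -/

import Mathlib

open MvPolynomial

/-- Substitution realizing the translation action `(ω, v) ↦ (ω, ω×r + v)` on the
polynomial ring `ℝ[ω₁, ω₂, ω₃, v₁, v₂, v₃]` (variables `0,1,2` are `ω`, `3,4,5` are `v`). -/
noncomputable def transSub (r : Fin 3 → ℝ) : Fin 6 → MvPolynomial (Fin 6) ℝ :=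
  ![X 0, X 1, X 2,
    X 1 * C (r 2) - X 2 * C (r 1) + X 3,
    X 2 * C (r 0) - X 0 * C (r 2) + X 4,
    X 0 * C (r 1) - X 1 * C (r 0) + X 5]

/-!
The point `(ω, ω₀ v)` is the translate of `(ω, (ω·v) e₁)` by `r = (0, v₃, -v₂)`, so an invariant
`f` satisfies the polynomial identity `f(ω, ω₀ v) = f(ω, (ω·v) e₁)`. In degree `k` in `v` it reads
`ω₀ᵏ f_k = (ω·v)ᵏ c_k(ω)`. As `ω₀` is prime and does not divide `ω·v`, `ω₀ᵏ` divides `c_k`, hence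
`f_k = (ω·v)ᵏ d_k(ω)`.
-/

namespace MvPolynomial

variable {σ τ R M : Type*}

section CommSemiring

variable [CommSemiring R] [AddCommMonoid M]

theorem IsWeightedHomogeneous.bind₁ {w : σ → M} {w' : τ → M} {φ : σ → MvPolynomial τ R}
    (hφ : ∀ i, (φ i).IsWeightedHomogeneous w' (w i)) {g : MvPolynomial σ R} {k : M}
    (hg : g.IsWeightedHomogeneous w k) : (bind₁ φ g).IsWeightedHomogeneous w' k := by
  rw [← support_sum_monomial_coeff g, map_sum]
  refine Submodule.sum_mem (weightedHomogeneousSubmodule R w' k) fun d hd => ?_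
  rw [mem_weightedHomogeneousSubmodule, bind₁_monomial, ← hg (mem_support_iff.mp hd),
    Finsupp.weight_apply, Finsupp.sum]
  exact (IsWeightedHomogeneous.prod _ _ _ fun i _ => (hφ i).pow (d i)).C_mul _

theorem weightedHomogeneousComponent_bind₁ {w : σ → M} {w' : τ → M}
    {φ : σ → MvPolynomial τ R} (hφ : ∀ i, (φ i).IsWeightedHomogeneous w' (w i))
    (f : MvPolynomial σ R) (k : M) :
    weightedHomogeneousComponent w' k (bind₁ φ f) =
      bind₁ φ (weightedHomogeneousComponent w k f) := by
  conv_lhs => rw [← sum_weightedHomogeneousComponent w f]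
  have hfin := weightedHomogeneousComponent_finsupp (w := w) f
  rw [map_finsum _ hfin, map_finsum _ (hfin.fun_comp (map_zero _))]
  refine (finsum_eq_single _ k fun j hj => ?_).trans ?_
  · exact ((weightedHomogeneousComponent_isWeightedHomogeneous j f).bind₁ hφ)
      |>.weightedHomogeneousComponent_ne k hj.symm
  · exact ((weightedHomogeneousComponent_isWeightedHomogeneous k f).bind₁ hφ)
      |>.weightedHomogeneousComponent_same

theorem IsWeightedHomogeneous.bind₁_pow_mul {w : σ → ℕ} {g : MvPolynomial σ R} {k : ℕ}
    (hg : g.IsWeightedHomogeneous w k) (t : MvPolynomial τ R) (u : σ → MvPolynomial τ R) :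
    MvPolynomial.bind₁ (fun i => t ^ w i * u i) g = t ^ k * MvPolynomial.bind₁ u g := by
  conv_lhs => rw [← support_sum_monomial_coeff g]
  conv_rhs => rw [← support_sum_monomial_coeff g]
  rw [map_sum, map_sum, Finset.mul_sum]
  refine Finset.sum_congr rfl fun d hd => ?_
  rw [bind₁_monomial, bind₁_monomial, ← hg (mem_support_iff.mp hd), Finsupp.weight_apply,
    Finsupp.sum]
  simp only [mul_pow, ← pow_mul, Finset.prod_mul_distrib, Finset.prod_pow_eq_pow_sum, smul_eq_mul,
    mul_comm (w _)]
  ring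

theorem eval_bind₁ (x : τ → R) (g : σ → MvPolynomial τ R) (f : MvPolynomial σ R) :
    eval x (bind₁ g f) = eval (fun i => eval x (g i)) f := by
  change aeval x (bind₁ g f) = _
  rw [aeval_bind₁]
  rfl

end CommSemiring

section Domain

variable [CommRing R] [IsDomain R]

theorem vars_mul_eq [DecidableEq σ] {p q : MvPolynomial σ R} (hp : p ≠ 0) (hq : q ≠ 0) :
    (p * q).vars = p.vars ∪ q.vars := by
  simp only [vars_def, degrees_mul_eq hp hq, Multiset.toFinset_add]

theorem mem_supported_of_mul_mem_supported {p q : MvPolynomial σ R} {s : Set σ} (hp : p ≠ 0)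
    (h : p * q ∈ supported R s) : q ∈ supported R s := by
  classical
  rcases eq_or_ne q 0 with rfl | hq
  · exact zero_mem _
  rw [mem_supported, vars_mul_eq hp hq] at h
  rw [mem_supported]
  exact fun i hi => h (Finset.mem_union_right _ hi)

theorem exists_mem_supported_of_X_pow_mul_eq {i : σ} {k : ℕ} {p q c : MvPolynomial σ R}
    {s : Set σ} (hq : ¬ X i ∣ q) (hc : c ∈ supported R s) (h : X i ^ k * p = q ^ k * c) :
    ∃ d ∈ supported R s, p = q ^ k * d := by
  have hX : (X i : MvPolynomial σ R) ^ k ≠ 0 := pow_ne_zero _ (X_ne_zero i)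
  obtain ⟨d, rfl⟩ : X i ^ k ∣ c :=
    X_prime.pow_dvd_of_dvd_mul_left k (fun h' => hq (X_prime.dvd_of_dvd_pow h')) ⟨p, h.symm⟩
  refine ⟨d, mem_supported_of_mul_mem_supported hX hc, mul_left_cancel₀ hX ?_⟩
  rw [h]
  ring

end Domain

end MvPolynomial

namespace TranslationInvariants

def vDegree : Fin 6 → ℕ := ![0, 0, 0, 1, 1, 1]

noncomputable def omegaDotV : MvPolynomial (Fin 6) ℝ := X 0 * X 3 + X 1 * X 4 + X 2 * X 5

noncomputable def vToE₁ : Fin 6 → MvPolynomial (Fin 6) ℝ := ![X 0, X 1, X 2, 1, 0, 0]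

noncomputable def scaleV (i : Fin 6) : MvPolynomial (Fin 6) ℝ := X 0 ^ vDegree i * X i

noncomputable def collapseV (i : Fin 6) : MvPolynomial (Fin 6) ℝ := omegaDotV ^ vDegree i * vToE₁ i

theorem bind₁_scaleV_eq_bind₁_collapseV {f : MvPolynomial (Fin 6) ℝ}
    (hf : ∀ r : Fin 3 → ℝ, bind₁ (transSub r) f = f) :
    bind₁ scaleV f = bind₁ collapseV f := by
  refine MvPolynomial.funext fun x => ?_
  set y : Fin 6 → ℝ := fun i => eval x (collapseV i)
  calc eval x (bind₁ scaleV f)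
      = eval (fun i => eval y (transSub ![0, x 5, -x 4] i)) f := by
        rw [eval_bind₁]
        congr 2
        funext i
        fin_cases i <;> simp [y, transSub, scaleV, collapseV, vDegree, omegaDotV, vToE₁]
    _ = eval y f := by rw [← eval_bind₁, hf]
    _ = eval x (bind₁ collapseV f) := (eval_bind₁ ..).symm

theorem isWeightedHomogeneous_scaleV (i : Fin 6) :
    (scaleV i).IsWeightedHomogeneous vDegree (vDegree i) := by
  have h0 : vDegree 0 = 0 := rfl
  rw [scaleV]
  simpa [h0] using ((isWeightedHomogeneous_X ℝ vDegree 0).pow (vDegree i)).mul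
    (isWeightedHomogeneous_X ℝ vDegree i)

theorem isWeightedHomogeneous_collapseV (i : Fin 6) :
    (collapseV i).IsWeightedHomogeneous vDegree (vDegree i) := by
  have hX (j : Fin 6) := isWeightedHomogeneous_X ℝ vDegree j
  have hdot : omegaDotV.IsWeightedHomogeneous vDegree 1 :=
    (((hX 0).mul (hX 3)).add ((hX 1).mul (hX 4))).add ((hX 2).mul (hX 5))
  have hE : (vToE₁ i).IsWeightedHomogeneous vDegree 0 := by
    fin_cases i
    exacts [hX 0, hX 1, hX 2, isWeightedHomogeneous_one ℝ vDegree,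
      isWeightedHomogeneous_zero ℝ vDegree 0, isWeightedHomogeneous_zero ℝ vDegree 0]
  rw [collapseV]
  simpa using (hdot.pow (vDegree i)).mul hE

theorem X_zero_pow_mul_component_eq {f : MvPolynomial (Fin 6) ℝ}
    (hf : ∀ r : Fin 3 → ℝ, bind₁ (transSub r) f = f) (k : ℕ) :
    X 0 ^ k * weightedHomogeneousComponent vDegree k f =
      omegaDotV ^ k * bind₁ vToE₁ (weightedHomogeneousComponent vDegree k f) := by
  have hk := weightedHomogeneousComponent_isWeightedHomogeneous (w := vDegree) k f
  calc X 0 ^ k * weightedHomogeneousComponent vDegree k f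
      = bind₁ scaleV (weightedHomogeneousComponent vDegree k f) := by
        have h := hk.bind₁_pow_mul (X 0) X
        rw [bind₁_X_left, AlgHom.id_apply] at h
        exact h.symm
    _ = weightedHomogeneousComponent vDegree k (bind₁ scaleV f) :=
        (weightedHomogeneousComponent_bind₁ isWeightedHomogeneous_scaleV f k).symm
    _ = weightedHomogeneousComponent vDegree k (bind₁ collapseV f) := by
        rw [bind₁_scaleV_eq_bind₁_collapseV hf]
    _ = bind₁ collapseV (weightedHomogeneousComponent vDegree k f) :=
        weightedHomogeneousComponent_bind₁ isWeightedHomogeneous_collapseV f k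
    _ = omegaDotV ^ k * bind₁ vToE₁ (weightedHomogeneousComponent vDegree k f) :=
        hk.bind₁_pow_mul _ _

theorem X_zero_not_dvd_omegaDotV : ¬ X 0 ∣ omegaDotV := by
  rintro ⟨q, hq⟩
  simpa [omegaDotV] using congrArg (eval ![0, 1, 0, 0, 1, 0]) hq

theorem bind₁_vToE₁_mem_supported (p : MvPolynomial (Fin 6) ℝ) :
    bind₁ vToE₁ p ∈ supported ℝ ({0, 1, 2} : Set (Fin 6)) := by
  have hrange : Set.range vToE₁ ⊆ supported ℝ ({0, 1, 2} : Set (Fin 6)) := by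
    rintro _ ⟨i, rfl⟩
    fin_cases i <;> simp [vToE₁, X_mem_supported]
  have hp : bind₁ vToE₁ p ∈ (aeval vToE₁).range := AlgHom.mem_range_self _ p
  rw [aeval_range] at hp
  exact Algebra.adjoin_le hrange hp

end TranslationInvariants

open TranslationInvariants

theorem translation_invariants_generated
    (f : MvPolynomial (Fin 6) ℝ)
    (hf : ∀ r : Fin 3 → ℝ, MvPolynomial.bind₁ (transSub r) f = f) :
    f ∈ Algebra.adjoin ℝ
      ({X 0, X 1, X 2, X 0 * X 3 + X 1 * X 4 + X 2 * X 5} :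
        Set (MvPolynomial (Fin 6) ℝ)) := by
  set A := Algebra.adjoin ℝ
      ({X 0, X 1, X 2, X 0 * X 3 + X 1 * X 4 + X 2 * X 5} : Set (MvPolynomial (Fin 6) ℝ))
  have hω : supported ℝ ({0, 1, 2} : Set (Fin 6)) ≤ A := by
    rw [supported_eq_adjoin_X]
    refine Algebra.adjoin_mono ?_
    rintro _ ⟨i, hi, rfl⟩
    rcases hi with rfl | rfl | rfl <;> simp
  have hcomponent (k : ℕ) : weightedHomogeneousComponent vDegree k f ∈ A := by
    obtain ⟨d, hd, hfk⟩ := exists_mem_supported_of_X_pow_mul_eq X_zero_not_dvd_omegaDotV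
      (bind₁_vToE₁_mem_supported _) (X_zero_pow_mul_component_eq hf k)
    rw [hfk]
    exact mul_mem (pow_mem (Algebra.subset_adjoin (by simp [omegaDotV])) k) (hω hd)
  rw [← sum_weightedHomogeneousComponent vDegree f,
    finsum_eq_sum _ (weightedHomogeneousComponent_finsupp f)]
  exact Subalgebra.sum_mem _ fun k _ => hcomponent k
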